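/- Fix $n \geq 1$. Suppose that for every $n$-tuple $(I_1, \dots, I_n)$ of finite lists with entries in $\mathrm{Fin}\,4$ we are given a smooth function $T_{I_1, \dots, I_n} : (\mathbb{R}^4)^n \to \mathbb{C}$, and suppose the family is antisymmetric in the last two appended indices of each slot: for every $l$, every tuple of lists, and all $\mu, \nu \in \mathrm{Fin}\,4$, $T_{I_1, \dots, I_l{+\!+}[\mu,\nu], \dots, I_n} = - T_{I_1, \dots, I_l{+\!+}[\nu,\mu], \dots, I_n}$. Define a new family $\delta T$ by $(\delta T)_{I_1, \dots, I_n} = i \sum_{l=1}^{n} (-1)^{s_l} \sum_{\mu \in \mathrm{Fin}\,4} \partial_{x_l^{\mu}} T_{I_1, \dots, I_l{+\!+}[\mu], \dots, I_n}$, where $s_l = \sum_{j<l} \mathrm{length}(I_j)$ and $\partial_{x_l^{\mu}}$ is the partial derivative with respect to the $\mu$-th coordinate of the $l$-th $\mathbb{R}^4$ argument. Then $\delta(\delta T) = 0$, i.e., $(\delta(\delta T))_{I_1,\dots,I_n} = 0$ identically for every tuple of index lists. -/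

import Mathlib

open scoped BigOperators

namespace DeltaSquared

/-- The operator `δ` on families of functions `(ℝ⁴)ⁿ → ℂ` indexed by `n`-tuples of
lists of Lorentz indices:
`(δT)_{I₁,…,Iₙ}(x) = i ∑_l (-1)^{s_l} ∑_μ ∂_{x_l^μ} T_{I₁,…,I_l ++ [μ],…,Iₙ}(x)`,
with `s_l = ∑_{j<l} |I_j|`. -/
noncomputable def delta (n : ℕ)
    (T : (Fin n → List (Fin 4)) → (Fin n → Fin 4 → ℝ) → ℂ) :
    (Fin n → List (Fin 4)) → (Fin n → Fin 4 → ℝ) → ℂ :=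
  fun I x =>
    Complex.I *
      ∑ l : Fin n,
        (-1 : ℂ) ^ (∑ j ∈ Finset.Iio l, (I j).length) *
          ∑ μ : Fin 4,
            fderiv ℝ (T (Function.update I l (I l ++ [μ]))) x
              (Pi.single l (Pi.single μ (1 : ℝ)))

/-! ### Auxiliary definitions -/

/-- The sign `(-1)^{s_l}` with `s_l = ∑_{j<l} |I_j|`. -/
private noncomputable def sgn {n : ℕ} (I : Fin n → List (Fin 4)) (l : Fin n) : ℂ :=
  (-1 : ℂ) ^ (∑ j ∈ Finset.Iio l, (I j).length)

/-- Append an index `μ` to the `l`-th list. -/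
private def upd {n : ℕ} (I : Fin n → List (Fin 4)) (l : Fin n) (μ : Fin 4) :
    Fin n → List (Fin 4) :=
  Function.update I l (I l ++ [μ])

/-- Basis direction for the `μ`-th coordinate of the `l`-th slot. -/
private noncomputable def bvec {n : ℕ} (l : Fin n) (μ : Fin 4) : Fin n → Fin 4 → ℝ :=
  Pi.single l (Pi.single μ (1 : ℝ))

/-! ### Combinatorial lemmas -/

private lemma sgn_upd {n : ℕ} (I : Fin n → List (Fin 4)) (l l' : Fin n) (μ : Fin 4) :
    sgn (upd I l μ) l' = (if l < l' then -1 else 1) * sgn I l' := by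
  unfold sgn upd
  by_cases h : l ∈ Finset.Iio l'
  · have hsum : (∑ j ∈ Finset.Iio l', ((Function.update I l (I l ++ [μ])) j).length)
        = (∑ j ∈ Finset.Iio l', (I j).length) + 1 := by
      have hlen : ∀ j, ((Function.update I l (I l ++ [μ])) j).length
          = Function.update (fun k => (I k).length) l ((I l ++ [μ]).length) j := by
        intro j; exact (Function.apply_update (fun k L => List.length L) I l _ j)
      simp only [hlen]
      rw [Finset.sum_update_of_mem h, ← Finset.add_sum_erase _ _ h]
      simp [List.length_append, Finset.sdiff_singleton_eq_erase]; ring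
    rw [hsum, pow_succ, if_pos (Finset.mem_Iio.mp h)]
    ring
  · have hsum : (∑ j ∈ Finset.Iio l', ((Function.update I l (I l ++ [μ])) j).length)
        = (∑ j ∈ Finset.Iio l', (I j).length) := by
      refine Finset.sum_congr rfl fun j hj => ?_
      rw [Function.update_of_ne (by rintro rfl; exact h hj)]
    rw [hsum, if_neg (fun hlt => h (Finset.mem_Iio.mpr hlt)), one_mul]

private lemma upd_upd_same {n : ℕ} (I : Fin n → List (Fin 4)) (l : Fin n) (μ ν : Fin 4) :
    upd (upd I l μ) l ν = Function.update I l (I l ++ [μ, ν]) := by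
  unfold upd
  simp [Function.update_idem, List.append_assoc]

private lemma upd_upd_comm {n : ℕ} (I : Fin n → List (Fin 4)) {l l' : Fin n} (h : l ≠ l')
    (μ ν : Fin 4) : upd (upd I l μ) l' ν = upd (upd I l' ν) l μ := by
  unfold upd
  rw [show (Function.update I l (I l ++ [μ])) l' = I l' from Function.update_of_ne h.symm _ _,
    show (Function.update I l' (I l' ++ [ν])) l = I l from Function.update_of_ne h _ _,
    Function.update_comm h]

/-! ### Analytic lemmas -/

private lemma contDiff_fderiv_apply {n : ℕ} {f : (Fin n → Fin 4 → ℝ) → ℂ}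
    (hf : ContDiff ℝ (⊤ : ℕ∞) f) (v : Fin n → Fin 4 → ℝ) :
    ContDiff ℝ (⊤ : ℕ∞) (fun x => fderiv ℝ f x v) :=
  (ContinuousLinearMap.apply ℝ ℂ v).contDiff.comp (hf.fderiv_right (by simp))

private lemma fderiv_fderiv_apply {n : ℕ} {f : (Fin n → Fin 4 → ℝ) → ℂ}
    (hf : ContDiff ℝ (⊤ : ℕ∞) f) (v x w : Fin n → Fin 4 → ℝ) :
    fderiv ℝ (fun y => fderiv ℝ f y v) x w = fderiv ℝ (fderiv ℝ f) x w v := by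
  have h1 : DifferentiableAt ℝ (fderiv ℝ f) x :=
    ((hf.fderiv_right (m := 1) (WithTop.coe_le_coe.mpr le_top)).differentiable one_ne_zero).differentiableAt
  have h2 : fderiv ℝ (fun y => (ContinuousLinearMap.apply ℝ ℂ v) (fderiv ℝ f y)) x =
      (ContinuousLinearMap.apply ℝ ℂ v).comp (fderiv ℝ (fderiv ℝ f) x) :=
    ((ContinuousLinearMap.apply ℝ ℂ v).hasFDerivAt.comp x h1.hasFDerivAt).fderiv
  simpa using congrArg (fun L => L w) h2

private lemma schwarz {n : ℕ} {f : (Fin n → Fin 4 → ℝ) → ℂ} (hf : ContDiff ℝ (⊤ : ℕ∞) f)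
    (x v w : Fin n → Fin 4 → ℝ) :
    fderiv ℝ (fderiv ℝ f) x v w = fderiv ℝ (fderiv ℝ f) x w v :=
  (hf.contDiffAt.isSymmSndFDerivAt (by simp; exact (WithTop.coe_le_coe.mpr (le_top : (2 : ℕ∞) ≤ ⊤) : ((2 : ℕ∞) : WithTop ℕ∞) ≤ _))) v w

private lemma snd_fderiv_neg {n : ℕ} (f : (Fin n → Fin 4 → ℝ) → ℂ)
    (x v w : Fin n → Fin 4 → ℝ) :
    fderiv ℝ (fderiv ℝ (-f)) x v w = -(fderiv ℝ (fderiv ℝ f) x v w) := by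
  have h1 : fderiv ℝ (-f) = fun y => -(fderiv ℝ f y) := funext fun y => fderiv_neg
  rw [h1, fderiv_fun_neg]
  simp

/-- The derivative of `δT` in a direction `w`. -/
private lemma fderiv_delta_apply {n : ℕ}
    (T : (Fin n → List (Fin 4)) → (Fin n → Fin 4 → ℝ) → ℂ)
    (hsmooth : ∀ I, ContDiff ℝ (⊤ : ℕ∞) (T I)) (J : Fin n → List (Fin 4))
    (x w : Fin n → Fin 4 → ℝ) :
    fderiv ℝ (delta n T J) x w =
      Complex.I * ∑ l' : Fin n, sgn J l' *
        ∑ ν : Fin 4, fderiv ℝ (fderiv ℝ (T (upd J l' ν))) x w (bvec l' ν) := by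
  have hg : ∀ (l' : Fin n) (ν : Fin 4), Differentiable ℝ
      (fun y => fderiv ℝ (T (upd J l' ν)) y (bvec l' ν)) :=
    fun l' ν => (contDiff_fderiv_apply (hsmooth _) _).differentiable (by simp)
  have hterm : ∀ l' : Fin n, DifferentiableAt ℝ
      (fun y => sgn J l' * ∑ ν : Fin 4, fderiv ℝ (T (upd J l' ν)) y (bvec l' ν)) x :=
    fun l' => (DifferentiableAt.fun_sum (fun ν _ => (hg l' ν).differentiableAt)).const_mul _
  have h0 : delta n T J = fun y => Complex.I *
      ∑ l' : Fin n, sgn J l' * ∑ ν : Fin 4, fderiv ℝ (T (upd J l' ν)) y (bvec l' ν) := rfl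
  rw [h0, fderiv_const_mul (DifferentiableAt.fun_sum fun l' _ => hterm l'),
    ContinuousLinearMap.smul_apply, smul_eq_mul]
  congr 1
  rw [fderiv_fun_sum (fun l' _ => hterm l'), ContinuousLinearMap.sum_apply]
  refine Finset.sum_congr rfl fun l' _ => ?_
  rw [fderiv_const_mul (DifferentiableAt.fun_sum fun ν _ => (hg l' ν).differentiableAt),
    ContinuousLinearMap.smul_apply, smul_eq_mul]
  congr 1
  rw [fderiv_fun_sum (fun ν _ => (hg l' ν).differentiableAt), ContinuousLinearMap.sum_apply]
  exact Finset.sum_congr rfl fun ν _ => fderiv_fderiv_apply (hsmooth _) _ x w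

/-- Nilpotency `δ² = 0` of the signed divergence operator `δ`, for families of
smooth functions that are antisymmetric in the last two appended indices of each slot. -/
theorem delta_delta_eq_zero (n : ℕ) (hn : 1 ≤ n)
    (T : (Fin n → List (Fin 4)) → (Fin n → Fin 4 → ℝ) → ℂ)
    (hsmooth : ∀ I, ContDiff ℝ (⊤ : ℕ∞) (T I))
    (hanti : ∀ (I : Fin n → List (Fin 4)) (l : Fin n) (μ ν : Fin 4),
      T (Function.update I l (I l ++ [μ, ν])) =
        - T (Function.update I l (I l ++ [ν, μ]))) :
    ∀ (I : Fin n → List (Fin 4)) (x : Fin n → Fin 4 → ℝ),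
      delta n (delta n T) I x = 0 := by
  intro I x
  classical
  -- the summand of the fourfold sum
  set S : Fin n → Fin 4 → Fin n → Fin 4 → ℂ := fun l μ l' ν =>
    Complex.I * (sgn I l * (Complex.I * (sgn (upd I l μ) l' *
      fderiv ℝ (fderiv ℝ (T (upd (upd I l μ) l' ν))) x (bvec l μ) (bvec l' ν)))) with hS
  -- pointwise antisymmetry of `S` under swapping `(l,μ)` and `(l',ν)`
  have key : ∀ l μ l' ν, S l μ l' ν = - S l' ν l μ := by
    intro l μ l' ν
    rcases eq_or_ne l l' with rfl | hne
    · -- diagonal case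
      have hD : fderiv ℝ (fderiv ℝ (T (upd (upd I l μ) l ν))) x (bvec l μ) (bvec l ν)
          = -(fderiv ℝ (fderiv ℝ (T (upd (upd I l ν) l μ))) x (bvec l ν) (bvec l μ)) := by
        rw [upd_upd_same, hanti I l μ ν, snd_fderiv_neg, upd_upd_same,
          schwarz (hsmooth _) x]
      rw [hS]
      simp only
      rw [hD, sgn_upd, sgn_upd]
      ring
    · -- off-diagonal case
      have hD : fderiv ℝ (fderiv ℝ (T (upd (upd I l μ) l' ν))) x (bvec l μ) (bvec l' ν)
          = fderiv ℝ (fderiv ℝ (T (upd (upd I l' ν) l μ))) x (bvec l' ν) (bvec l μ) := by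
        rw [upd_upd_comm I hne, schwarz (hsmooth _) x]
      rw [hS]
      simp only
      rw [hD, sgn_upd, sgn_upd]
      rcases hne.lt_or_gt with h | h
      · rw [if_pos h, if_neg (asymm h)]; ring
      · rw [if_neg (asymm h), if_pos h]; ring
  -- the fourfold sum vanishes
  have hA : (∑ l : Fin n, ∑ μ : Fin 4, ∑ l' : Fin n, ∑ ν : Fin 4, S l μ l' ν) = 0 := by
    have hswap : (∑ l : Fin n, ∑ μ : Fin 4, ∑ l' : Fin n, ∑ ν : Fin 4, S l' ν l μ)
        = ∑ l : Fin n, ∑ μ : Fin 4, ∑ l' : Fin n, ∑ ν : Fin 4, S l μ l' ν := by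
      calc (∑ l : Fin n, ∑ μ : Fin 4, ∑ l' : Fin n, ∑ ν : Fin 4, S l' ν l μ)
          = ∑ l : Fin n, ∑ l' : Fin n, ∑ μ : Fin 4, ∑ ν : Fin 4, S l' ν l μ :=
            Finset.sum_congr rfl fun l _ => Finset.sum_comm
        _ = ∑ l' : Fin n, ∑ l : Fin n, ∑ μ : Fin 4, ∑ ν : Fin 4, S l' ν l μ :=
            Finset.sum_comm
        _ = ∑ l' : Fin n, ∑ l : Fin n, ∑ ν : Fin 4, ∑ μ : Fin 4, S l' ν l μ :=
            Finset.sum_congr rfl fun l' _ => Finset.sum_congr rfl fun l _ =>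
              Finset.sum_comm
        _ = ∑ l' : Fin n, ∑ ν : Fin 4, ∑ l : Fin n, ∑ μ : Fin 4, S l' ν l μ :=
            Finset.sum_congr rfl fun l' _ => Finset.sum_comm
    have hneg : (∑ l : Fin n, ∑ μ : Fin 4, ∑ l' : Fin n, ∑ ν : Fin 4, S l μ l' ν)
        = -(∑ l : Fin n, ∑ μ : Fin 4, ∑ l' : Fin n, ∑ ν : Fin 4, S l' ν l μ) := by
      simp only [← Finset.sum_neg_distrib]
      exact Finset.sum_congr rfl fun l _ => Finset.sum_congr rfl fun μ _ =>
        Finset.sum_congr rfl fun l' _ => Finset.sum_congr rfl fun ν _ => key l μ l' ν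
    rw [hswap] at hneg
    linear_combination hneg / 2
  -- expand `δ(δT)` into the fourfold sum
  have h0 : delta n (delta n T) I x = Complex.I *
      ∑ l : Fin n, sgn I l * ∑ μ : Fin 4, fderiv ℝ (delta n T (upd I l μ)) x (bvec l μ) := rfl
  rw [h0]
  have h1 : ∀ (l : Fin n) (μ : Fin 4),
      fderiv ℝ (delta n T (upd I l μ)) x (bvec l μ) =
        Complex.I * ∑ l' : Fin n, sgn (upd I l μ) l' *
          ∑ ν : Fin 4, fderiv ℝ (fderiv ℝ (T (upd (upd I l μ) l' ν))) x (bvec l μ)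
            (bvec l' ν) :=
    fun l μ => fderiv_delta_apply T hsmooth (upd I l μ) x (bvec l μ)
  calc (Complex.I * ∑ l : Fin n, sgn I l *
        ∑ μ : Fin 4, fderiv ℝ (delta n T (upd I l μ)) x (bvec l μ))
      = ∑ l : Fin n, ∑ μ : Fin 4, ∑ l' : Fin n, ∑ ν : Fin 4, S l μ l' ν := by
        simp only [h1, hS, Finset.mul_sum]
    _ = 0 := hA

end DeltaSquared
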